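/- Let S be a set, μ : 𝒫(S) → ℝ any set function, and n ≥ 1. If I_n vanishes on every family of n pairwise disjoint subsets of S, then for every r ≥ n the interference function I_r vanishes on every family of r pairwise disjoint subsets of S. -/
import Mathlib


/-- The `n`-th interference function of a set function `μ`:
`Iₙ(A₁, …, Aₙ) = Σ_{∅ ≠ T ⊆ {1,…,n}} (−1)^{n−|T|} μ(⋃_{i∈T} A i)`. -/
def interf {S : Type*} (μ : Set S → ℝ) (n : ℕ) (A : Fin n → Set S) : ℝ :=
  ∑ T ∈ Finset.univ.powerset.filter (fun T : Finset (Fin n) => T ≠ ∅),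
    (-1 : ℝ) ^ (n - T.card) * μ (⋃ i ∈ T, A i)

/-- Auxiliary sum over *all* subsets, with an extra set `X` unioned in. -/
def interfAux {S : Type*} (μ : Set S → ℝ) (n : ℕ) (A : Fin n → Set S) (X : Set S) : ℝ :=
  ∑ T : Finset (Fin n), (-1 : ℝ) ^ (n - T.card) * μ ((⋃ i ∈ T, A i) ∪ X)

lemma powerset_map' {α β : Type*} (s : Finset α) (e : α ↪ β) :
    (s.map e).powerset = s.powerset.map (Finset.mapEmbedding e).toEmbedding := by
  ext t
  simp only [Finset.mem_powerset, Finset.mem_map, RelEmbedding.coe_toEmbedding,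
    Finset.mapEmbedding_apply, Finset.subset_map_iff]
  constructor
  · rintro ⟨u, hu, rfl⟩; exact ⟨u, hu, rfl⟩
  · rintro ⟨u, hu, rfl⟩; exact ⟨u, hu, rfl⟩

lemma biUnion_map' {α β S : Type*} (t : Finset α) (e : α ↪ β) (g : β → Set S) :
    (⋃ i ∈ t.map e, g i) = ⋃ j ∈ t, g (e j) := by
  ext x
  simp only [Set.mem_iUnion, Finset.mem_map, exists_prop]
  constructor
  · rintro ⟨i, ⟨j, hj, rfl⟩, hx⟩; exact ⟨j, hj, hx⟩
  · rintro ⟨j, hj, hx⟩; exact ⟨e j, ⟨j, hj, rfl⟩, hx⟩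

lemma interfAux_snoc {S : Type*} (μ : Set S → ℝ) (r : ℕ) (C : Fin r → Set S) (Z X : Set S) :
    interfAux μ (r + 1) (Fin.snoc C Z) X = -interfAux μ r C X + interfAux μ r C (Z ∪ X) := by
  have huniv : (Finset.univ : Finset (Fin (r + 1))) =
      insert (Fin.last r) (Finset.univ.map ⟨Fin.castSucc, Fin.castSucc_injective r⟩) := by
    ext i
    simp only [Finset.mem_univ, Finset.mem_insert, Finset.mem_map, true_and,
      Function.Embedding.coeFn_mk, true_iff]
    rcases Fin.eq_castSucc_or_eq_last i with ⟨j, rfl⟩ | rfl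
    · exact Or.inr ⟨j, rfl⟩
    · exact Or.inl rfl
  have hnot : Fin.last r ∉
      Finset.univ.map (⟨Fin.castSucc, Fin.castSucc_injective r⟩ : Fin r ↪ Fin (r + 1)) := by
    simp only [Finset.mem_map, Finset.mem_univ, true_and, Function.Embedding.coeFn_mk,
      not_exists]
    exact fun x => (Fin.castSucc_lt_last x).ne
  unfold interfAux
  rw [← Finset.powerset_univ (α := Fin (r + 1)), huniv, Finset.sum_powerset_insert hnot,
    powerset_map', Finset.sum_map, Finset.sum_map, Finset.powerset_univ]
  have hcard : ∀ t : Finset (Fin r), t.card ≤ r := fun t => by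
    simpa using Finset.card_le_card (Finset.subset_univ t)
  have h1 : ∀ t : Finset (Fin r),
      (-1 : ℝ) ^ (r + 1 -
          ((Finset.mapEmbedding (⟨Fin.castSucc, Fin.castSucc_injective r⟩ : Fin r ↪ Fin (r + 1))).toEmbedding t).card) *
        μ ((⋃ i ∈ (Finset.mapEmbedding (⟨Fin.castSucc, Fin.castSucc_injective r⟩ : Fin r ↪ Fin (r + 1))).toEmbedding t,
            (Fin.snoc C Z : Fin (r + 1) → Set S) i) ∪ X)
      = -((-1 : ℝ) ^ (r - t.card) * μ ((⋃ i ∈ t, C i) ∪ X)) := by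
    intro t
    simp only [RelEmbedding.coe_toEmbedding, Finset.mapEmbedding_apply]
    rw [Finset.card_map, biUnion_map']
    simp only [Function.Embedding.coeFn_mk, Fin.snoc_castSucc]
    rw [Nat.succ_sub (hcard t), pow_succ]
    ring
  have h2 : ∀ t : Finset (Fin r),
      (-1 : ℝ) ^ (r + 1 - (insert (Fin.last r)
            ((Finset.mapEmbedding (⟨Fin.castSucc, Fin.castSucc_injective r⟩ : Fin r ↪ Fin (r + 1))).toEmbedding t)).card) *
        μ ((⋃ i ∈ insert (Fin.last r)
              ((Finset.mapEmbedding (⟨Fin.castSucc, Fin.castSucc_injective r⟩ : Fin r ↪ Fin (r + 1))).toEmbedding t),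
            (Fin.snoc C Z : Fin (r + 1) → Set S) i) ∪ X)
      = (-1 : ℝ) ^ (r - t.card) * μ ((⋃ i ∈ t, C i) ∪ (Z ∪ X)) := by
    intro t
    simp only [RelEmbedding.coe_toEmbedding, Finset.mapEmbedding_apply]
    have hnot' : Fin.last r ∉
        t.map (⟨Fin.castSucc, Fin.castSucc_injective r⟩ : Fin r ↪ Fin (r + 1)) := by
      simp only [Finset.mem_map, Function.Embedding.coeFn_mk, not_exists]
      exact fun x hx => (Fin.castSucc_lt_last x).ne hx.2
    rw [Finset.card_insert_of_notMem hnot', Finset.card_map,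
      Finset.set_biUnion_insert, biUnion_map']
    simp only [Function.Embedding.coeFn_mk, Fin.snoc_castSucc, Fin.snoc_last]
    rw [Nat.add_sub_add_right]
    congr 1
    rw [Set.union_assoc, Set.union_left_comm]
  rw [Finset.sum_congr rfl (fun t _ => h1 t), Finset.sum_congr rfl (fun t _ => h2 t),
    Finset.sum_neg_distrib]

lemma interf_eq_aux {S : Type*} (μ : Set S → ℝ) (r : ℕ) (A : Fin r → Set S) :
    interf μ r A = interfAux μ r A ∅ - (-1 : ℝ) ^ r * μ ∅ := by
  unfold interf interfAux
  rw [Finset.powerset_univ, Finset.filter_ne']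
  have hmem : (∅ : Finset (Fin r)) ∈ (Finset.univ : Finset (Finset (Fin r))) :=
    Finset.mem_univ _
  rw [← Finset.add_sum_erase _ _ hmem]
  simp [Set.union_empty]

/-- If `Iₙ` vanishes on every family of `n` pairwise disjoint subsets of `S` (with `n ≥ 1`),
then for every `r ≥ n`, `I_r` vanishes on every family of `r` pairwise disjoint subsets. -/
theorem interf_vanishes_of_ge {S : Type*} (μ : Set S → ℝ) (n : ℕ) (hn : 1 ≤ n)
    (h : ∀ A : Fin n → Set S,
      (∀ i j, i ≠ j → Disjoint (A i) (A j)) → interf μ n A = 0) :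
    ∀ r, n ≤ r → ∀ A : Fin r → Set S,
      (∀ i j, i ≠ j → Disjoint (A i) (A j)) → interf μ r A = 0 := by
  have key : ∀ r, n ≤ r → ∀ A : Fin r → Set S,
      (∀ i j, i ≠ j → Disjoint (A i) (A j)) → interfAux μ r A ∅ = (-1 : ℝ) ^ r * μ ∅ := by
    intro r hr
    induction r, hr using Nat.le_induction with
    | base =>
      intro A hA
      have := h A hA
      rw [interf_eq_aux] at this
      linarith
    | succ r hr ih =>
      intro A hA
      -- r ≥ n ≥ 1, so r = m + 1
      obtain ⟨m, rfl⟩ : ∃ m, r = m + 1 :=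
        ⟨r - 1, (Nat.succ_pred_eq_of_pos (lt_of_lt_of_le hn hr)).symm⟩
      set C : Fin m → Set S := fun i => A i.castSucc.castSucc with hC
      set Z : Set S := A (Fin.last m).castSucc with hZ
      set Y : Set S := A (Fin.last (m + 1)) with hY
      have hAeq : A = Fin.snoc (Fin.snoc C Z) Y := by
        funext i
        rcases Fin.eq_castSucc_or_eq_last i with ⟨j, rfl⟩ | rfl
        · rcases Fin.eq_castSucc_or_eq_last j with ⟨k, rfl⟩ | rfl
          · simp [Fin.snoc_castSucc, hC]
          · simp [Fin.snoc_castSucc, Fin.snoc_last, hZ]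
        · simp [Fin.snoc_last, hY]
      -- disjointness of derived families
      have hdisjC : ∀ i j, i ≠ j → Disjoint (C i) (C j) := by
        intro i j hij
        exact hA _ _ (by simp [Fin.castSucc_inj, hij])
      have hCZ : ∀ i, Disjoint (C i) Z := fun i =>
        hA _ _ (by simp [Fin.castSucc_inj, (Fin.castSucc_lt_last i).ne])
      have hCY : ∀ i, Disjoint (C i) Y := fun i =>
        hA _ _ ((Fin.castSucc_lt_last _).ne)
      have hZY : Disjoint Z Y :=
        hA _ _ ((Fin.castSucc_lt_last _).ne)
      have disj_snoc : ∀ W : Set S, (∀ i, Disjoint (C i) W) →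
          ∀ i j : Fin (m + 1), i ≠ j →
            Disjoint ((Fin.snoc C W : Fin (m+1) → Set S) i)
              ((Fin.snoc C W : Fin (m+1) → Set S) j) := by
        intro W hW i j hij
        rcases Fin.eq_castSucc_or_eq_last i with ⟨i', rfl⟩ | rfl <;>
          rcases Fin.eq_castSucc_or_eq_last j with ⟨j', rfl⟩ | rfl
        · simp only [Fin.snoc_castSucc]
          exact hdisjC _ _ (by simpa [Fin.castSucc_inj] using hij)
        · simp only [Fin.snoc_castSucc, Fin.snoc_last]; exact hW i'
        · simp only [Fin.snoc_castSucc, Fin.snoc_last]; exact (hW j').symm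
        · exact absurd rfl hij
      -- main computation
      have e1 : interfAux μ (m + 2) A ∅ =
          -interfAux μ (m + 1) (Fin.snoc C Z) ∅ + interfAux μ (m + 1) (Fin.snoc C Z) (Y ∪ ∅) := by
        rw [hAeq]; exact interfAux_snoc μ (m + 1) (Fin.snoc C Z) Y ∅
      have e2 : interfAux μ (m + 1) (Fin.snoc C Z) (Y ∪ ∅) =
          -interfAux μ m C (Y ∪ ∅) + interfAux μ m C (Z ∪ (Y ∪ ∅)) :=
        interfAux_snoc μ m C Z (Y ∪ ∅)
      have e3 : interfAux μ (m + 1) (Fin.snoc C Y) ∅ =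
          -interfAux μ m C ∅ + interfAux μ m C (Y ∪ ∅) :=
        interfAux_snoc μ m C Y ∅
      have e4 : interfAux μ (m + 1) (Fin.snoc C (Z ∪ Y)) ∅ =
          -interfAux μ m C ∅ + interfAux μ m C ((Z ∪ Y) ∪ ∅) :=
        interfAux_snoc μ m C (Z ∪ Y) ∅
      have eZY : (Z ∪ (Y ∪ ∅)) = ((Z ∪ Y) ∪ ∅) := by
        rw [Set.union_empty, Set.union_empty]
      have hZ' := ih (Fin.snoc C Z) (disj_snoc Z hCZ)
      have hY' := ih (Fin.snoc C Y) (disj_snoc Y hCY)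
      have hZY' := ih (Fin.snoc C (Z ∪ Y))
        (disj_snoc (Z ∪ Y) (fun i => Disjoint.union_right (hCZ i) (hCY i)))
      rw [eZY] at e2
      have : interfAux μ (m + 2) A ∅ =
          -interfAux μ (m + 1) (Fin.snoc C Z) ∅ - interfAux μ (m + 1) (Fin.snoc C Y) ∅ +
            interfAux μ (m + 1) (Fin.snoc C (Z ∪ Y)) ∅ := by
        rw [e1, e2, e3, e4]; ring
      rw [this, hZ', hY', hZY']
      ring
  intro r hr A hA
  rw [interf_eq_aux, key r hr A hA]
  ring
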